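/- arXiv:2507.04007 — 2 statements merged into one kernel-verified Lean document; each statement's English description precedes it below -/
import Mathlib

section
/- For all integers m ≥ 2 and n ≥ 1, one has N(m,n) ≤ C(m+1,n) ≤ N(m+1,n): every independent set of the m×n grid graph, extended by an empty column, yields an independent set of the (m+1)×n cylindrical grid graph (injectively), and every independent set of the (m+1)×n cylindrical grid graph is an independent set of the (m+1)×n grid graph (since the latter is a subgraph of the former with the same vertex set). -/
open SimpleGraph Filter Real Topology

open Classical in
/-- Number of independent sets (vertex subsets with no two adjacent vertices,
the empty set included) of a finite simple graph. -/
noncomputable def numIndep {V : Type*} [Fintype V] (G : SimpleGraph V) : ℕ :=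
  (Finset.univ.filter fun s : Finset V => ∀ u ∈ s, ∀ v ∈ s, ¬ G.Adj u v).card

/-- `N(m,n)`: number of independent sets of the `m × n` grid graph, the box
product of the path graphs on `m` and `n` vertices. -/
noncomputable def gridN (m n : ℕ) : ℕ :=
  numIndep (pathGraph m □ pathGraph n)


/-- `C(m,n)`: number of independent sets of the `m × n` cylindrical grid graph,
the box product of the cycle graph on `m` vertices with the path graph on `n`
vertices. -/
noncomputable def cylC (m n : ℕ) : ℕ :=
  numIndep (cycleGraph m □ pathGraph n)

theorem numIndep_le_of_comap_le {V W : Type*} [Fintype V] [Fintype W]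
    {G : SimpleGraph V} {H : SimpleGraph W} (f : V ↪ W) (hf : H.comap f ≤ G) :
    numIndep G ≤ numIndep H := by
  classical
  unfold numIndep
  refine Finset.card_le_card_of_injOn (·.map f) ?_ (Finset.map_injective f).injOn
  intro s hs
  simp only [Finset.coe_filter, Finset.mem_univ, true_and, Set.mem_ofPred_eq] at hs ⊢
  simp only [Finset.mem_map, forall_exists_index, and_imp, forall_apply_eq_imp_iff₂]
  exact fun u hu v hv hadj => hs u hu v hv (hf hadj)

theorem numIndep_anti {V : Type*} [Fintype V] : Antitone (numIndep : SimpleGraph V → ℕ) :=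
  fun _ _ h => numIndep_le_of_comap_le (.refl V) h

theorem Fin.val_castSucc_sub_castSucc_eq_one {m : ℕ} {i j : Fin m} :
    ((i.castSucc - j.castSucc : Fin (m + 1)) : ℕ) = 1 ↔ j.val + 1 = i.val := by
  rcases le_or_gt j i with h | h
  · rw [Fin.sub_val_of_le (Fin.castSucc_le_castSucc_iff.2 h)]
    simp only [Fin.val_castSucc]
    omega
  · rw [Fin.coe_sub_iff_lt.2 (Fin.castSucc_lt_castSucc_iff.2 h)]
    simp only [Fin.val_castSucc]
    omega

namespace SimpleGraph

theorem comap_prodMap_boxProd {α β γ δ : Type*} (G : SimpleGraph γ) (H : SimpleGraph δ)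
    (f : α ↪ γ) (g : β ↪ δ) : (G □ H).comap (f.prodMap g) = G.comap f □ H.comap g := by
  ext ⟨a, b⟩ ⟨a', b'⟩
  simp [boxProd_adj]

theorem boxProd_mono_left {α β : Type*} {G G' : SimpleGraph α} (h : G ≤ G')
    (H : SimpleGraph β) : (G □ H) ≤ (G' □ H) := by
  rintro x y (⟨hG, hy⟩ | hH)
  exacts [Or.inl ⟨h hG, hy⟩, Or.inr hH]

-- The only cycle edge that is not a path edge, `{0, m}`, meets the deleted vertex `m`.
theorem comap_castSuccEmb_cycleGraph (m : ℕ) :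
    (cycleGraph (m + 1)).comap Fin.castSuccEmb = pathGraph m := by
  ext i j
  simp only [comap_adj, Fin.coe_castSuccEmb, cycleGraph_adj', Fin.val_castSucc_sub_castSucc_eq_one,
    pathGraph_adj]
  tauto

end SimpleGraph

theorem grid_le_cyl_le_grid_general (m n : ℕ) :
    gridN m n ≤ cylC (m + 1) n ∧ cylC (m + 1) n ≤ gridN (m + 1) n := by
  refine ⟨numIndep_le_of_comap_le (Fin.castSuccEmb.prodMap (.refl _)) ?_,
    numIndep_anti (boxProd_mono_left pathGraph_le_cycleGraph _)⟩
  rw [comap_prodMap_boxProd, comap_castSuccEmb_cycleGraph]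
  exact le_rfl

theorem grid_le_cyl_le_grid (m n : ℕ) (hm : 2 ≤ m) (hn : 1 ≤ n) :
    gridN m n ≤ cylC (m + 1) n ∧ cylC (m + 1) n ≤ gridN (m + 1) n :=
  grid_le_cyl_le_grid_general m n
end

section
/- For all integers m ≥ 3 and all positive integers a, b, the number of independent sets of the m×n cylindrical grid graph satisfies both C(m, a+b) ≤ C(m,a) · C(m,b) and C(m,a) · C(m,b) ≤ C(m, a+b+1) (vertical cutting and splicing with an inserted ring of unselected vertices). -/
open SimpleGraph Filter Real Topology

/-!
Restricting an independent set of a graph to two subgraphs that together cover its vertices is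
injective, and the union of independent sets of two vertex-disjoint induced subgraphs with no edge
between them is again independent. For the cylinder `Cₘ □ Pₙ`, cutting the path after `a`
rows gives two covering sub-cylinders; splicing leaves one empty ring between them so that the two
pieces are separated.
-/

section Transfer

variable {V W₁ W₂ : Type*} [Fintype V] [Fintype W₁] [Fintype W₂]
  {G : SimpleGraph V} {H₁ : SimpleGraph W₁} {H₂ : SimpleGraph W₂}

theorem numIndep_le_mul_of_cover (f₁ : H₁ →g G) (f₂ : H₂ →g G)
    (hcover : ∀ v, v ∈ Set.range f₁ ∨ v ∈ Set.range f₂) :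
    numIndep G ≤ numIndep H₁ * numIndep H₂ := by
  classical
  unfold numIndep
  rw [← Finset.card_product]
  refine Finset.card_le_card_of_injOn
    (fun S : Finset V => (({w | f₁ w ∈ S} : Finset W₁), ({w | f₂ w ∈ S} : Finset W₂)))
    (fun S hS => ?_) (fun S _ T _ hST => ?_)
  · simp only [Finset.coe_filter, Finset.mem_univ, true_and, Set.mem_ofPred_eq,
      Finset.coe_product, Set.mem_prod, Finset.mem_filter] at hS ⊢
    exact ⟨fun u hu v hv huv => hS _ hu _ hv (f₁.map_adj huv),
      fun u hu v hv huv => hS _ hu _ hv (f₂.map_adj huv)⟩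
  · simp only [Prod.mk.injEq, Finset.ext_iff, Finset.mem_filter, Finset.mem_univ,
      true_and] at hST
    ext v
    rcases hcover v with ⟨w, rfl⟩ | ⟨w, rfl⟩
    exacts [hST.1 w, hST.2 w]

theorem mul_numIndep_le_of_separated (f₁ : H₁ ↪g G) (f₂ : H₂ ↪g G)
    (hsep : ∀ w₁ w₂, f₁ w₁ ≠ f₂ w₂ ∧ ¬ G.Adj (f₁ w₁) (f₂ w₂)) :
    numIndep H₁ * numIndep H₂ ≤ numIndep G := by
  classical
  unfold numIndep
  rw [← Finset.card_product]
  refine Finset.card_le_card_of_injOn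
    (fun P => P.1.map f₁.toEmbedding ∪ P.2.map f₂.toEmbedding) (fun P hP => ?_)
    (fun P _ Q _ hPQ => ?_)
  · simp only [Finset.coe_product, Finset.coe_filter, Finset.mem_univ, true_and,
      Set.mem_prod, Set.mem_ofPred_eq] at hP
    simp only [Finset.coe_filter, Finset.mem_univ, true_and, Set.mem_ofPred_eq,
      Finset.mem_union, Finset.mem_map, RelEmbedding.coe_toEmbedding]
    rintro _ (⟨u, hu, rfl⟩ | ⟨u, hu, rfl⟩) _ (⟨v, hv, rfl⟩ | ⟨v, hv, rfl⟩) huv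
    · exact hP.1 u hu v hv (f₁.map_adj_iff.mp huv)
    · exact (hsep u v).2 huv
    · exact (hsep v u).2 huv.symm
    · exact hP.2 u hu v hv (f₂.map_adj_iff.mp huv)
  · dsimp only at hPQ
    have hfst : ∀ (S : Finset W₁) (T : Finset W₂) w,
        f₁ w ∈ S.map f₁.toEmbedding ∪ T.map f₂.toEmbedding ↔ w ∈ S := fun S T w => by
      simp only [Finset.mem_union, Finset.mem_map, RelEmbedding.coe_toEmbedding,
        f₁.injective.eq_iff, exists_eq_right]
      exact or_iff_left fun ⟨w', _, h⟩ => (hsep w w').1 h.symm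
    have hsnd : ∀ (S : Finset W₁) (T : Finset W₂) w,
        f₂ w ∈ S.map f₁.toEmbedding ∪ T.map f₂.toEmbedding ↔ w ∈ T := fun S T w => by
      simp only [Finset.mem_union, Finset.mem_map, RelEmbedding.coe_toEmbedding,
        f₂.injective.eq_iff, exists_eq_right]
      exact or_iff_right fun ⟨w', _, h⟩ => (hsep w' w).1 h
    exact Prod.ext (Finset.ext fun w => by rw [← hfst P.1 P.2, hPQ, hfst])
      (Finset.ext fun w => by rw [← hsnd P.1 P.2, hPQ, hsnd])

end Transfer

namespace SimpleGraph

variable {V W W' : Type*}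

@[simps]
def Embedding.boxProdMapRight (G : SimpleGraph V) {H : SimpleGraph W} {H' : SimpleGraph W'}
    (f : H ↪g H') : (G □ H) ↪g (G □ H') where
  toFun := Prod.map id f
  inj' := Function.injective_id.prodMap f.injective
  map_rel_iff' := by simp [boxProd_adj]

def pathGraph.shift (k : ℕ) {n m : ℕ} (h : k + n ≤ m) : pathGraph n ↪g pathGraph m where
  toFun j := ⟨k + j, by omega⟩
  inj' i j hij := Fin.ext (by simpa using hij)
  map_rel_iff' {i j} := by
    change (pathGraph m).Adj ⟨k + i, _⟩ ⟨k + j, _⟩ ↔ _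
    simp only [pathGraph_adj]
    omega

@[simp]
theorem pathGraph.coe_shift_apply (k : ℕ) {n m : ℕ} (h : k + n ≤ m) (j : Fin n) :
    (pathGraph.shift k h j : ℕ) = k + j :=
  rfl

end SimpleGraph

section Cylinder

variable {V : Type*} [Fintype V] (G : SimpleGraph V) (a b : ℕ)

theorem numIndep_boxProd_pathGraph_add_le_mul :
    numIndep (G □ pathGraph (a + b)) ≤
      numIndep (G □ pathGraph a) * numIndep (G □ pathGraph b) := by
  refine numIndep_le_mul_of_cover
    (Embedding.boxProdMapRight G (pathGraph.shift 0 (by omega))).toHom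
    (Embedding.boxProdMapRight G (pathGraph.shift a le_rfl)).toHom ?_
  rintro ⟨v, j⟩
  by_cases hj : (j : ℕ) < a
  · exact .inl ⟨(v, ⟨j, hj⟩), by simp [Fin.ext_iff]⟩
  · exact .inr ⟨(v, ⟨j - a, by omega⟩), by
      simp only [RelHom.coeFn_mk, Function.Embedding.toFun_eq_coe, RelEmbedding.coe_toEmbedding,
        Embedding.boxProdMapRight_apply, Prod.map_apply, id_eq, Prod.mk.injEq, Fin.ext_iff,
        pathGraph.coe_shift_apply, true_and]
      omega⟩

theorem mul_numIndep_boxProd_pathGraph_le_add_add_one :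
    numIndep (G □ pathGraph a) * numIndep (G □ pathGraph b) ≤
      numIndep (G □ pathGraph (a + b + 1)) := by
  refine mul_numIndep_le_of_separated
    (Embedding.boxProdMapRight G (pathGraph.shift 0 (by omega)))
    (Embedding.boxProdMapRight G (pathGraph.shift (a + 1) (by omega)))
    fun ⟨u, i⟩ ⟨v, j⟩ => ?_
  have := i.isLt
  simp only [Embedding.boxProdMapRight_apply, Prod.map_apply, id_eq, ne_eq, Prod.mk.injEq,
    Fin.ext_iff, pathGraph.coe_shift_apply, zero_add, not_and, boxProd_adj, pathGraph_adj, not_or]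
  omega

end Cylinder

theorem cyl_cut_and_splice_general (m a b : ℕ) :
    cylC m (a + b) ≤ cylC m a * cylC m b ∧
    cylC m a * cylC m b ≤ cylC m (a + b + 1) :=
  ⟨numIndep_boxProd_pathGraph_add_le_mul _ a b,
    mul_numIndep_boxProd_pathGraph_le_add_add_one _ a b⟩

theorem cyl_cut_and_splice (m a b : ℕ) (hm : 3 ≤ m) (ha : 0 < a) (hb : 0 < b) :
    cylC m (a + b) ≤ cylC m a * cylC m b ∧
    cylC m a * cylC m b ≤ cylC m (a + b + 1) :=
  cyl_cut_and_splice_general m a b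
end
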